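/- Let R be a ring, let 𝒞 be the category of R-modules of finite length, let D : 𝒞 → 𝒞 be an exact contravariant duality with D² naturally isomorphic to the identity, and let d be a function assigning a natural number to each finite-length module such that: d(M) = max of d over composition factors of M, and d(0) = 0. Let I be a finite-length module and Ψ : D(I) → I a homomorphism. Assume: (a1) d(ker Ψ) < d(D(I)); (a2) every composition factor V of I with d(V) = d(I) satisfies D(V) ≅ V and occurs with multiplicity one in I; (a3) every nonzero submodule W of I satisfies d(W) = d(I). Then the image of Ψ equals the socle of I (the maximal semisimple submodule), and d(I / Soc(I)) < d(I). In particular, every composition factor V of I with d(V) = d(I) occurs as a submodule of I. -/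

import Mathlib

open CategoryTheory

universe u

/-- The category of finite-length `R`-modules, as a full subcategory of
`ModuleCat R`. -/
abbrev FLMod (R : Type u) [Ring R] :=
  ObjectProperty.FullSubcategory (fun M : ModuleCat.{u} R => IsFiniteLength R M)

/-- `V` is a composition factor of `M`: a simple module isomorphic to a
quotient `B/A` of submodules `A ≤ B` of `M`. -/
def IsCompFactor (R : Type u) [Ring R] (M V : Type u) [AddCommGroup M] [Module R M]
    [AddCommGroup V] [Module R V] : Prop :=
  IsSimpleModule R V ∧ ∃ A B : Submodule R M, A ≤ B ∧
    Nonempty ((↥B ⧸ Submodule.comap B.subtype A) ≃ₗ[R] V)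

/-- The socle of a module: the sum of all its simple submodules (the maximal
semisimple submodule). -/
def socle (R : Type u) [Ring R] (M : Type u) [AddCommGroup M] [Module R M] :
    Submodule R M :=
  sSup {W : Submodule R M | IsSimpleModule R ↥W}

/-- `V` occurs with multiplicity one in `M`: in every composition series of
`M` exactly one factor is isomorphic to `V`. -/
def MultOne (R : Type u) [Ring R] (M V : Type u) [AddCommGroup M] [Module R M]
    [AddCommGroup V] [Module R V] : Prop :=
  ∀ s : CompositionSeries (Submodule R M), s.head = ⊥ → s.last = ⊤ →
    ∃! i : Fin s.length,
      Nonempty ((↥(s i.succ) ⧸ Submodule.comap (s i.succ).subtype (s i.castSucc)) ≃ₗ[R] V)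

/-! ### Auxiliary machinery -/

section SZAux

variable {R : Type u} [Ring R]

/-- Extract a linear equivalence from an isomorphism in `FLMod R`. -/
noncomputable def SZisoEquiv {A B : FLMod R} (e : A ≅ B) : A.obj ≃ₗ[R] B.obj :=
  LinearEquiv.ofLinear e.hom.hom.hom e.inv.hom.hom
    (LinearMap.ext fun x => congrArg (fun f => f.hom.hom x) e.inv_hom_id)
    (LinearMap.ext fun x => congrArg (fun f => f.hom.hom x) e.hom_inv_id)

variable {M N V : Type u}
  [AddCommGroup M] [Module R M] [AddCommGroup N] [Module R N] [AddCommGroup V] [Module R V]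

/-- `⊤/N ≃ M/N`. -/
noncomputable def SZquotTop (N' : Submodule R M) :
    (↥(⊤ : Submodule R M) ⧸ N'.comap (⊤ : Submodule R M).subtype) ≃ₗ[R] M ⧸ N' := by
  refine (Submodule.quotEquivOfEq _ _ ?_).trans
    ((N'.mkQ.comp (⊤ : Submodule R M).subtype).quotKerEquivOfSurjective ?_)
  · rw [LinearMap.ker_comp, Submodule.ker_mkQ]
  · intro q
    obtain ⟨x, rfl⟩ := N'.mkQ_surjective q
    exact ⟨⟨x, trivial⟩, rfl⟩

/-- `W/⊥ ≃ W`. -/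
noncomputable def SZquotBot (W : Submodule R M) :
    (↥W ⧸ (⊥ : Submodule R M).comap W.subtype) ≃ₗ[R] ↥W :=
  Submodule.quotEquivOfEqBot _ (by rw [Submodule.comap_bot, Submodule.ker_subtype])

/-- Pulling a factor back along a surjection. -/
noncomputable def SZfactorEquiv (f : M →ₗ[R] N) (hf : Function.Surjective f)
    {A B : Submodule R N} (_hAB : A ≤ B) :
    (↥(B.comap f) ⧸ (A.comap f).comap (B.comap f).subtype) ≃ₗ[R]
      (↥B ⧸ A.comap B.subtype) := by
  have hres : ∀ x ∈ B.comap f, f x ∈ B := fun x hx => hx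
  set g : ↥(B.comap f) →ₗ[R] (↥B ⧸ A.comap B.subtype) :=
    (A.comap B.subtype).mkQ.comp (f.restrict hres) with hg
  have hker : LinearMap.ker g = (A.comap f).comap (B.comap f).subtype := by
    ext x
    simp only [hg, LinearMap.mem_ker, LinearMap.comp_apply, Submodule.mkQ_apply,
      Submodule.Quotient.mk_eq_zero, Submodule.mem_comap, LinearMap.restrict_apply,
      Submodule.coe_subtype]
  have hsurj : Function.Surjective g := by
    rintro q
    obtain ⟨b, rfl⟩ := (A.comap B.subtype).mkQ_surjective q
    obtain ⟨a, ha⟩ := hf b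
    refine ⟨⟨a, by simp [Submodule.mem_comap, ha, b.2]⟩, ?_⟩
    simp only [hg, LinearMap.comp_apply, Submodule.mkQ_apply]
    congr 1
    exact Subtype.ext (by simp [LinearMap.restrict_apply, ha])
  exact (Submodule.quotEquivOfEq _ _ hker.symm).trans (g.quotKerEquivOfSurjective hsurj)

/-- Pushing a factor forward along an injection. -/
noncomputable def SZmapEquiv (f : M →ₗ[R] N) (hf : Function.Injective f)
    {A B : Submodule R M} (_hAB : A ≤ B) :
    (↥B ⧸ A.comap B.subtype) ≃ₗ[R]
      (↥(B.map f) ⧸ (A.map f).comap (B.map f).subtype) := by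
  have hres : ∀ x ∈ B, f x ∈ B.map f := fun x hx => Submodule.mem_map_of_mem hx
  set g : ↥B →ₗ[R] (↥(B.map f) ⧸ (A.map f).comap (B.map f).subtype) :=
    ((A.map f).comap (B.map f).subtype).mkQ.comp (f.restrict hres) with hg
  have hker : LinearMap.ker g = A.comap B.subtype := by
    ext x
    simp only [hg, LinearMap.mem_ker, LinearMap.comp_apply, Submodule.mkQ_apply,
      Submodule.Quotient.mk_eq_zero, Submodule.mem_comap, LinearMap.restrict_apply,
      Submodule.coe_subtype]
    constructor
    · rintro ⟨a, haA, ha⟩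
      obtain rfl : a = (x : M) := hf ha
      exact haA
    · intro hx; exact ⟨x, hx, rfl⟩
  have hsurj : Function.Surjective g := by
    rintro q
    obtain ⟨b, rfl⟩ := Submodule.mkQ_surjective _ q
    obtain ⟨a, haB, ha⟩ := b.2
    refine ⟨⟨a, haB⟩, ?_⟩
    simp only [hg, LinearMap.comp_apply, Submodule.mkQ_apply]
    congr 1
    exact Subtype.ext (by simp [LinearMap.restrict_apply, ha])
  exact (Submodule.quotEquivOfEq _ _ hker.symm).trans (g.quotKerEquivOfSurjective hsurj)

theorem SZcf_of_surj_map (p : M →ₗ[R] V) (hp : Function.Surjective p)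
    (hV : IsSimpleModule R V) : IsCompFactor R M V :=
  ⟨hV, LinearMap.ker p, ⊤, le_top, ⟨(SZquotTop _).trans (p.quotKerEquivOfSurjective hp)⟩⟩

theorem SZcf_of_surjective (f : M →ₗ[R] N) (hf : Function.Surjective f)
    (h : IsCompFactor R N V) : IsCompFactor R M V := by
  obtain ⟨hV, A, B, hAB, ⟨e⟩⟩ := h
  exact ⟨hV, A.comap f, B.comap f, Submodule.comap_mono hAB,
    ⟨(SZfactorEquiv f hf hAB).trans e⟩⟩

theorem SZcf_of_injective (f : M →ₗ[R] N) (hf : Function.Injective f)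
    (h : IsCompFactor R M V) : IsCompFactor R N V := by
  obtain ⟨hV, A, B, hAB, ⟨e⟩⟩ := h
  exact ⟨hV, A.map f, B.map f, Submodule.map_mono hAB,
    ⟨(SZmapEquiv f hf hAB).symm.trans e⟩⟩

theorem SZcf_self (hV : IsSimpleModule R V) : IsCompFactor R V V :=
  SZcf_of_surj_map LinearMap.id (fun x => ⟨x, rfl⟩) hV

theorem SZfl_sub (h : IsFiniteLength R M) (p : Submodule R M) : IsFiniteLength R ↥p := by
  rw [isFiniteLength_iff_isNoetherian_isArtinian] at h ⊢
  obtain ⟨h1, h2⟩ := h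
  exact ⟨inferInstance, inferInstance⟩

theorem SZfl_quot (h : IsFiniteLength R M) (p : Submodule R M) : IsFiniteLength R (M ⧸ p) := by
  rw [isFiniteLength_iff_isNoetherian_isArtinian] at h ⊢
  obtain ⟨h1, h2⟩ := h
  exact ⟨inferInstance, inferInstance⟩

theorem SZne_bot {W : Submodule R M} (h : IsSimpleModule R ↥W) : W ≠ ⊥ :=
  (isSimpleModule_iff_isAtom.mp h).1

theorem SZsemisimple_sSup {S : Set (Submodule R M)} (hS : ∀ W ∈ S, IsSimpleModule R ↥W) :
    IsSemisimpleModule R ↥(sSup S) := by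
  set N' := sSup S with hN
  apply IsSemisimpleModule.of_sSup_simples_eq_top
  have hinj : Function.Injective N'.subtype := N'.injective_subtype
  have hmap : Submodule.map N'.subtype (sSup {m : Submodule R ↥N' | IsSimpleModule R ↥m}) = N' := by
    apply le_antisymm (Submodule.map_subtype_le _ _)
    rw [hN]
    apply sSup_le
    intro W hW
    have hWN : W ≤ N' := le_sSup hW
    have hmc : Submodule.map N'.subtype (Submodule.comap N'.subtype W) = W := by
      rw [Submodule.map_comap_subtype, inf_eq_right.mpr hWN]
    rw [← hmc]
    apply Submodule.map_mono
    apply le_sSup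
    haveI := hS W hW
    exact IsSimpleModule.congr (Submodule.comapSubtypeEquivOfLe hWN)
  apply Submodule.map_injective_of_injective hinj
  rw [hmap, Submodule.map_subtype_top]

theorem SZexists_coatom_between (hfl : IsFiniteLength R M) {A B : Submodule R M}
    (h : A < B) : ∃ C, A ≤ C ∧ C ⋖ B := by
  set Q := (↥B ⧸ A.comap B.subtype) with hQ
  have hflB : IsFiniteLength R ↥B := SZfl_sub hfl B
  have hflQ : IsFiniteLength R Q := SZfl_quot hflB _
  haveI hnoeth : IsNoetherian R Q :=
    (isFiniteLength_iff_isNoetherian_isArtinian.mp hflQ).1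
  haveI : Nontrivial Q := by
    obtain ⟨b, hbB, hbA⟩ := SetLike.exists_of_lt h
    refine ⟨Submodule.Quotient.mk ⟨b, hbB⟩, 0, ?_⟩
    rw [ne_eq, Submodule.Quotient.mk_eq_zero]
    exact hbA
  haveI : IsCoatomic (Submodule R Q) :=
    isCoatomic_of_orderTop_gt_wellFounded (isNoetherian_iff.mp hnoeth)
  obtain ⟨m, hm, -⟩ := (eq_top_or_exists_le_coatom (⊥ : Submodule R Q)).resolve_left
    bot_ne_top
  set π : ↥B →ₗ[R] Q := (A.comap B.subtype).mkQ with hπ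
  set C : Submodule R M := (m.comap π).map B.subtype with hC
  have hCB : C ≤ B := Submodule.map_subtype_le _ _
  have hcomap : (m.comap π) = C.comap B.subtype := by
    rw [hC, Submodule.comap_map_eq_of_injective B.injective_subtype]
  refine ⟨C, ?_, ?_⟩
  · intro a ha
    have haB : a ∈ B := h.le ha
    refine ⟨⟨a, haB⟩, ?_, rfl⟩
    show π ⟨a, haB⟩ ∈ m
    have hz : π ⟨a, haB⟩ = 0 := by
      rw [hπ, Submodule.mkQ_apply, Submodule.Quotient.mk_eq_zero]
      exact ha
    rw [hz]; exact m.zero_mem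
  · rw [covBy_iff_quot_is_simple hCB]
    have hker : LinearMap.ker (m.mkQ.comp π) = C.comap B.subtype := by
      rw [LinearMap.ker_comp, Submodule.ker_mkQ, hcomap]
    have hsurj : Function.Surjective (m.mkQ.comp π) :=
      (Submodule.mkQ_surjective m).comp (Submodule.mkQ_surjective _)
    haveI : IsSimpleModule R (Q ⧸ m) := isSimpleModule_iff_isCoatom.mpr hm
    exact IsSimpleModule.congr
      ((Submodule.quotEquivOfEq _ _ hker.symm).trans
        ((m.mkQ.comp π).quotKerEquivOfSurjective hsurj))

theorem SZexists_series (hfl : IsFiniteLength R M) :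
    ∀ (B A : Submodule R M), A ≤ B →
      ∃ s : CompositionSeries (Submodule R M), s.head = A ∧ s.last = B := by
  haveI : IsArtinian R M := (isFiniteLength_iff_isNoetherian_isArtinian.mp hfl).2
  have hwf : WellFounded (fun x y : Submodule R M => x < y) :=
    wellFounded_lt (α := Submodule R M)
  intro B
  induction B using hwf.induction with
  | _ B ih =>
    intro A hAB
    rcases eq_or_lt_of_le hAB with rfl | hlt
    · exact ⟨RelSeries.singleton _ A, rfl, rfl⟩
    · obtain ⟨C, hAC, hCB⟩ := SZexists_coatom_between hfl hlt
      obtain ⟨s, hh, hl⟩ := ih C hCB.lt A hAC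
      refine ⟨s.snoc B ?_, ?_, ?_⟩
      · show JordanHolderLattice.IsMaximal s.last B
        rw [hl]; exact hCB
      · rw [RelSeries.head_snoc, hh]
      · rw [RelSeries.last_snoc]

theorem SZappend_step {α : Type u} {r : SetRel α α} (p q : RelSeries r) (c : (p.last, q.head) ∈ r) :
    ∃ i : Fin (p.append q c).length,
      (p.append q c) i.castSucc = p.last ∧ (p.append q c) i.succ = q.head := by
  refine ⟨⟨p.length, by simp only [RelSeries.append_length]; omega⟩, ?_, ?_⟩
  · have h := RelSeries.append_apply_left p q c (Fin.last p.length)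
    convert h using 2
    · ext; simp
    · rfl
  · have h := RelSeries.append_apply_right p q c 0
    convert h using 2
    on_goal 2 => rfl
    all_goals
      have h1 : (p.length + 0) % (p.length + q.length + 1 + 1) = p.length :=
        Nat.mod_eq_of_lt (by omega)
      have h2 : 1 % (p.length + q.length + 1 + 1) = 1 := Nat.mod_eq_of_lt (by omega)
      have h3 : (p.length + 1) % (p.length + q.length + 1 + 1) = p.length + 1 :=
        Nat.mod_eq_of_lt (by omega)
      ext
      simp only [Fin.val_succ, Fin.val_add, Fin.coe_natAdd, Fin.val_zero, Fin.val_one',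
        Fin.val_natCast, RelSeries.append_length, h1, h2, h3, Fin.val_cast, Fin.val_natAdd, add_zero]

theorem SZappend_left_step {α : Type u} {r : SetRel α α} (p q : RelSeries r)
    (c : (p.last, q.head) ∈ r) (i : Fin p.length) :
    ∃ i' : Fin (p.append q c).length,
      (p.append q c) i'.castSucc = p i.castSucc ∧ (p.append q c) i'.succ = p i.succ := by
  refine ⟨⟨i.val, by simp only [RelSeries.append_length]; omega⟩, ?_, ?_⟩
  · have h := RelSeries.append_apply_left p q c i.castSucc
    convert h using 2
    ext; simp
  · have h := RelSeries.append_apply_left p q c i.succ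
    convert h using 2
    ext; simp

theorem SZtwo_occ (hfl : IsFiniteLength R M)
    {X Y Z W : Submodule R M} (hXY : X ⋖ Y) (hYZ : Y ≤ Z) (hZW : Z ⋖ W)
    (e1 : Nonempty ((↥Y ⧸ X.comap Y.subtype) ≃ₗ[R] V))
    (e2 : Nonempty ((↥W ⧸ Z.comap W.subtype) ≃ₗ[R] V))
    (hm : MultOne R M V) : False := by
  obtain ⟨s₁, h1h, h1l⟩ := SZexists_series hfl X ⊥ bot_le
  obtain ⟨s₂, h2h, h2l⟩ := SZexists_series hfl Z Y hYZ
  obtain ⟨s₃, h3h, h3l⟩ := SZexists_series hfl ⊤ W le_top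
  have c1 : JordanHolderLattice.IsMaximal s₁.last s₂.head := by rw [h1l, h2h]; exact hXY
  set t₁ : CompositionSeries (Submodule R M) := s₁.append s₂ c1 with ht₁
  have c2 : JordanHolderLattice.IsMaximal t₁.last s₃.head := by
    rw [ht₁, RelSeries.last_append, h2l, h3h]; exact hZW
  set t : CompositionSeries (Submodule R M) := t₁.append s₃ c2 with ht
  have hth : t.head = ⊥ := by rw [ht, RelSeries.head_append, ht₁, RelSeries.head_append, h1h]
  have htl : t.last = ⊤ := by rw [ht, RelSeries.last_append, h3l]
  obtain ⟨j, hj1, hj2⟩ := SZappend_step s₁ s₂ c1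
  obtain ⟨i₁, hi11, hi12⟩ := SZappend_left_step t₁ s₃ c2 j
  rw [hj1, h1l] at hi11
  rw [hj2, h2h] at hi12
  obtain ⟨i₂, hi21, hi22⟩ := SZappend_step t₁ s₃ c2
  rw [RelSeries.last_append, h2l] at hi21
  rw [h3h] at hi22
  obtain ⟨u, _, huniq⟩ := hm t hth htl
  have hP1 : Nonempty ((↥(t i₁.succ) ⧸ Submodule.comap (t i₁.succ).subtype (t i₁.castSucc))
      ≃ₗ[R] V) := by rw [hi12, hi11]; exact e1
  have hP2 : Nonempty ((↥(t i₂.succ) ⧸ Submodule.comap (t i₂.succ).subtype (t i₂.castSucc))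
      ≃ₗ[R] V) := by rw [hi22, hi21]; exact e2
  have heq : i₁ = i₂ := (huniq i₁ hP1).trans (huniq i₂ hP2).symm
  rw [heq, hi22] at hi12
  exact (lt_of_le_of_lt hYZ hZW.lt).ne' hi12

end SZAux

set_option maxHeartbeats 3200000

/-- Lemma 2.10.1.  Let `R` be a ring, `𝒞` the category of finite-length
`R`-modules, `D : 𝒞ᵒᵖ ⥤ 𝒞` an exact contravariant duality with `D² ≅ id`, and
`d` a function assigning a natural number to each module such that `d(M)` is
the maximum of `d` over the composition factors of `M`, `d(0) = 0`, and
`d ∘ D = d`.  Let `I` be a finite-length module and `Ψ : D(I) ⟶ I` with: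
(a1) `d(ker Ψ) < d(D(I))`; (a2) every composition factor `V` of `I` with
`d(V) = d(I)` satisfies `D(V) ≅ V` and has multiplicity one in `I`;
(a3) every nonzero submodule `W` of `I` has `d(W) = d(I)`.
Then `Image(Ψ) = Socle(I)` and `d(I/Socle(I)) < d(I)`; in particular every
composition factor `V` of `I` with `d(V) = d(I)` occurs as a submodule of `I`. -/
theorem stmt_14 (R : Type u) [Ring R]
    (d : (M : Type u) → [AddCommGroup M] → [Module R M] → ℕ)
    (hd_zero : ∀ (M : Type u) [AddCommGroup M] [Module R M], Subsingleton M → d M = 0)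
    (hd_le : ∀ (M : Type u) [AddCommGroup M] [Module R M],
      ∀ (V : Type u) [AddCommGroup V] [Module R V],
      IsFiniteLength R M → IsCompFactor R M V → d V ≤ d M)
    (hd_max : ∀ (M : Type u) [AddCommGroup M] [Module R M],
      IsFiniteLength R M → Nontrivial M →
      ∃ A B : Submodule R M, A ≤ B ∧
        IsSimpleModule R (↥B ⧸ Submodule.comap B.subtype A) ∧
        d (↥B ⧸ Submodule.comap B.subtype A) = d M)
    (D : (FLMod R)ᵒᵖ ⥤ FLMod R)
    (hD_exact : ∀ (A B C : FLMod R) (f : A ⟶ B) (g : B ⟶ C),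
      Function.Exact (show A.obj ⟶ B.obj from f.hom) (show B.obj ⟶ C.obj from g.hom) →
      Function.Exact
        (show (D.obj (Opposite.op C)).obj ⟶ (D.obj (Opposite.op B)).obj from (D.map g.op).hom)
        (show (D.obj (Opposite.op B)).obj ⟶ (D.obj (Opposite.op A)).obj from (D.map f.op).hom))
    (hD_mono : ∀ (A B : FLMod R) (f : A ⟶ B),
      Function.Injective (show A.obj ⟶ B.obj from f.hom) →
      Function.Surjective
        (show (D.obj (Opposite.op B)).obj ⟶ (D.obj (Opposite.op A)).obj from (D.map f.op).hom))
    (hD_epi : ∀ (A B : FLMod R) (f : A ⟶ B),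
      Function.Surjective (show A.obj ⟶ B.obj from f.hom) →
      Function.Injective
        (show (D.obj (Opposite.op B)).obj ⟶ (D.obj (Opposite.op A)).obj from (D.map f.op).hom))
    (hDD : D.rightOp ⋙ D ≅ 𝟭 (FLMod R))
    (hdD : ∀ M : FLMod R, d (D.obj (Opposite.op M)).obj = d M.obj)
    (I : FLMod R) (Ψ : D.obj (Opposite.op I) ⟶ I)
    (a1 : d (LinearMap.ker (show (D.obj (Opposite.op I)).obj ⟶ I.obj from Ψ.hom).hom) <
      d (D.obj (Opposite.op I)).obj)
    (a2 : ∀ V : FLMod R, IsCompFactor R I.obj V.obj → d V.obj = d I.obj →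
      Nonempty (D.obj (Opposite.op V) ≅ V) ∧ MultOne R I.obj V.obj)
    (a3 : ∀ W : Submodule R I.obj, W ≠ ⊥ → d W = d I.obj) :
    LinearMap.range (show (D.obj (Opposite.op I)).obj ⟶ I.obj from Ψ.hom).hom = socle R I.obj ∧
    d (I.obj ⧸ socle R I.obj) < d I.obj ∧
    ∀ V : FLMod R, IsCompFactor R I.obj V.obj → d V.obj = d I.obj →
      ∃ W : Submodule R I.obj, Nonempty (↥W ≃ₗ[R] V.obj) := by
  classical
  have hIfl : IsFiniteLength R I.obj := I.property
  have hDfl : IsFiniteLength R (D.obj (Opposite.op I)).obj := (D.obj (Opposite.op I)).property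
  set Ψl : (D.obj (Opposite.op I)).obj →ₗ[R] I.obj :=
    (show (D.obj (Opposite.op I)).obj ⟶ I.obj from Ψ.hom).hom with hΨl
  set n : ℕ := d I.obj with hn
  have ha1 : d ↥(LinearMap.ker Ψl) < n := by
    rw [hn, ← hdD I]
    exact a1
  have hn_pos : 0 < n := lt_of_le_of_lt (Nat.zero_le _) ha1
  -- d is invariant under isomorphism of finite-length modules
  have dcongr : ∀ (M₁ : Type u) [AddCommGroup M₁] [Module R M₁]
      (M₂ : Type u) [AddCommGroup M₂] [Module R M₂],
      IsFiniteLength R M₁ → (M₁ ≃ₗ[R] M₂) → d M₁ = d M₂ := by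
    intro M₁ _ _ M₂ _ _ hfl e
    have hfl₂ : IsFiniteLength R M₂ := e.isFiniteLength hfl
    by_cases hsub : Subsingleton M₁
    · haveI := hsub
      haveI : Subsingleton M₂ := e.symm.toEquiv.subsingleton
      rw [hd_zero M₁ ‹_›, hd_zero M₂ ‹_›]
    · haveI hnt₁ : Nontrivial M₁ := not_subsingleton_iff_nontrivial.mp hsub
      haveI hnt₂ : Nontrivial M₂ := e.symm.toEquiv.nontrivial
      apply le_antisymm
      · obtain ⟨A, B, hAB, hs, hdq⟩ := hd_max M₁ hfl hnt₁
        rw [← hdq]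
        exact hd_le M₂ _ hfl₂
          (SZcf_of_injective e.toLinearMap e.injective ⟨hs, A, B, hAB, ⟨LinearEquiv.refl _ _⟩⟩)
      · obtain ⟨A, B, hAB, hs, hdq⟩ := hd_max M₂ hfl₂ hnt₂
        rw [← hdq]
        exact hd_le M₁ _ hfl
          (SZcf_of_injective e.symm.toLinearMap e.symm.injective
            ⟨hs, A, B, hAB, ⟨LinearEquiv.refl _ _⟩⟩)
  -- D preserves triviality and nontriviality
  have Dsub : ∀ A : FLMod R, Subsingleton A.obj → Subsingleton (D.obj (Opposite.op A)).obj := by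
    intro A hA
    have hex : Function.Exact (show A.obj ⟶ A.obj from 𝟙 A.obj) (show A.obj ⟶ A.obj from 𝟙 A.obj) := by
      intro y
      constructor
      · intro _; exact ⟨y, rfl⟩
      · intro _; exact Subsingleton.elim _ _
    have hex2 := hD_exact A A A (𝟙 A) (𝟙 A) hex
    have hid : D.map (𝟙 A).op = 𝟙 (D.obj (Opposite.op A)) := by
      rw [CategoryTheory.op_id, D.map_id]
    rw [hid] at hex2
    refine subsingleton_of_forall_eq 0 fun y => ?_
    exact (hex2 y).mpr ⟨y, rfl⟩
  have Dnontriv : ∀ A : FLMod R, Nontrivial A.obj → Nontrivial (D.obj (Opposite.op A)).obj := by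
    intro A hA
    by_contra h
    rw [not_nontrivial_iff_subsingleton] at h
    have h2 := Dsub (D.obj (Opposite.op A)) h
    have e : (D.obj (Opposite.op (D.obj (Opposite.op A)))).obj ≃ₗ[R] A.obj :=
      SZisoEquiv (hDD.app A)
    haveI := h2
    haveI := hA
    exact not_subsingleton _ e.symm.toEquiv.subsingleton
  set J : Submodule R I.obj := LinearMap.range Ψl with hJ
  have hJne : J ≠ ⊥ := by
    intro h
    have hker : LinearMap.ker Ψl = ⊤ := by
      rw [LinearMap.ker_eq_top]
      exact LinearMap.range_eq_bot.mp h
    have heq := dcongr ↥(LinearMap.ker Ψl) (D.obj (Opposite.op I)).obj (SZfl_sub hDfl _)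
      (by rw [hker]; exact Submodule.topEquiv)
    rw [heq, hdD I, ← hn] at ha1
    omega
  -- ## Part (2): socle ≤ J
  have hsocJ : socle R I.obj ≤ J := by
    apply sSup_le
    intro V₀ hV₀
    haveI hV₀s : IsSimpleModule R ↥V₀ := hV₀
    set Vo : FLMod R := ⟨ModuleCat.of R ↥V₀, SZfl_sub hIfl V₀⟩ with hVo
    have hdV₀ : d ↥V₀ = n := a3 V₀ (SZne_bot hV₀)
    have hcfV₀ : IsCompFactor R I.obj ↥V₀ :=
      SZcf_of_injective V₀.subtype V₀.injective_subtype (SZcf_self hV₀)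
    obtain ⟨⟨isoDV⟩, hmult⟩ := a2 Vo hcfV₀ hdV₀
    let ι : Vo ⟶ I := ObjectProperty.homMk (ModuleCat.ofHom V₀.subtype)
    have hφ0 : Function.Surjective
        (show (D.obj (Opposite.op I)).obj ⟶ (D.obj (Opposite.op Vo)).obj from (D.map ι.op).hom) :=
      hD_mono Vo I ι V₀.injective_subtype
    set φ : (D.obj (Opposite.op I)).obj →ₗ[R] ↥V₀ :=
      ((SZisoEquiv isoDV).toLinearMap).comp
        (show (D.obj (Opposite.op I)).obj ⟶ (D.obj (Opposite.op Vo)).obj from (D.map ι.op).hom).hom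
      with hφdef
    have hφ : Function.Surjective φ := (SZisoEquiv isoDV).surjective.comp hφ0
    have hker_le : LinearMap.ker Ψl ≤ LinearMap.ker φ := by
      by_contra hcon
      have hcoatom : IsCoatom (LinearMap.ker φ) := by
        have hsimp : IsSimpleModule R ((D.obj (Opposite.op I)).obj ⧸ LinearMap.ker φ) :=
          IsSimpleModule.congr (φ.quotKerEquivOfSurjective hφ)
        exact isSimpleModule_iff_isCoatom.mp hsimp
      have hlt : LinearMap.ker φ < LinearMap.ker φ ⊔ LinearMap.ker Ψl :=
        left_lt_sup.mpr hcon
      have htop : LinearMap.ker φ ⊔ LinearMap.ker Ψl = ⊤ := hcoatom.2 _ hlt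
      have h2 : Submodule.map φ (LinearMap.ker φ) = ⊥ :=
        le_bot_iff.mp (Submodule.map_le_iff_le_comap.mpr le_rfl)
      have hmap : Submodule.map φ (LinearMap.ker Ψl) = ⊤ := by
        have h1 : Submodule.map φ (⊤ : Submodule R (D.obj (Opposite.op I)).obj) = ⊤ := by
          rw [Submodule.map_top, LinearMap.range_eq_top.mpr hφ]
        rw [← htop, Submodule.map_sup, h2, bot_sup_eq] at h1
        exact h1
      have hsurj' : Function.Surjective (φ.comp (LinearMap.ker Ψl).subtype) := by
        rw [← LinearMap.range_eq_top, LinearMap.range_comp, Submodule.range_subtype, hmap]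
      have hcf := SZcf_of_surj_map _ hsurj' hV₀
      have hle := hd_le ↥(LinearMap.ker Ψl) ↥V₀ (SZfl_sub hDfl _) hcf
      omega
    set p : ↥J →ₗ[R] ↥V₀ :=
      ((LinearMap.ker Ψl).liftQ φ hker_le) ∘ₗ
        (Ψl.quotKerEquivRange.symm.toLinearMap) with hpdef
    have hp : Function.Surjective p := by
      intro v
      obtain ⟨x, hx⟩ := hφ v
      refine ⟨Ψl.quotKerEquivRange (Submodule.Quotient.mk x), ?_⟩
      rw [hpdef]
      simp only [LinearMap.comp_apply, LinearEquiv.coe_toLinearMap,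
        LinearEquiv.symm_apply_apply, Submodule.liftQ_apply]
      exact hx
    by_cases hVJ : V₀ ≤ J
    · exact hVJ
    · exfalso
      set K : Submodule R I.obj := Submodule.map J.subtype (LinearMap.ker p) with hK
      have hcomapK : Submodule.comap J.subtype K = LinearMap.ker p := by
        rw [hK]; exact Submodule.comap_map_eq_of_injective J.injective_subtype _
      have e1 : (↥J ⧸ Submodule.comap J.subtype K) ≃ₗ[R] ↥V₀ :=
        (Submodule.quotEquivOfEq _ _ hcomapK).trans (p.quotKerEquivOfSurjective hp)
      have hKJ : K ⋖ J := by
        rw [covBy_iff_quot_is_simple (Submodule.map_subtype_le _ _)]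
        exact IsSimpleModule.congr e1
      have hVJbot : V₀ ⊓ J = ⊥ := by
        have hatom := isSimpleModule_iff_isAtom.mp hV₀s
        rcases hatom.le_iff.mp inf_le_left with h | h
        · exact h
        · exact absurd (h ▸ inf_le_right) hVJ
      have hVJc : Submodule.comap V₀.subtype (V₀ ⊓ J) =
          Submodule.comap V₀.subtype (⊥ : Submodule R I.obj) := by rw [hVJbot]
      have e2 : (↥(V₀ ⊔ J) ⧸ Submodule.comap (V₀ ⊔ J).subtype J) ≃ₗ[R] ↥V₀ :=
        (LinearMap.quotientInfEquivSupQuotient V₀ J).symm.trans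
          ((Submodule.quotEquivOfEq _ _ hVJc).trans (SZquotBot V₀))
      have hJsup : J ⋖ V₀ ⊔ J := by
        rw [covBy_iff_quot_is_simple le_sup_right]
        exact IsSimpleModule.congr e2
      exact SZtwo_occ hIfl hKJ le_rfl hJsup ⟨e1⟩ ⟨e2⟩ hmult
  -- ## Part (1): J ≤ socle
  have hJsoc : J ≤ socle R I.obj := by
    set S : Submodule R I.obj := sSup {W : Submodule R I.obj | IsSimpleModule R ↥W ∧ W ≤ J}
      with hS
    have hSJ : S ≤ J := sSup_le fun W hW => hW.2
    have hSsoc : S ≤ socle R I.obj := sSup_le fun W hW => le_sSup hW.1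
    rcases eq_or_lt_of_le hSJ with heq | hlt
    · rw [← heq]; exact hSsoc
    · exfalso
      obtain ⟨K, hSK, hKJ⟩ := SZexists_coatom_between hIfl hlt
      set Vq : Type u := (↥J ⧸ Submodule.comap J.subtype K) with hVq
      haveI hVqs : IsSimpleModule R Vq := (covBy_iff_quot_is_simple hKJ.le).mp hKJ
      have hVqfl : IsFiniteLength R Vq := SZfl_quot (SZfl_sub hIfl J) _
      set Vo : FLMod R := ⟨ModuleCat.of R Vq, hVqfl⟩ with hVo
      set q0 : (D.obj (Opposite.op I)).obj →ₗ[R] Vq :=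
        ((Submodule.comap J.subtype K).mkQ).comp
          (Ψl.codRestrict J fun x => LinearMap.mem_range_self Ψl x) with hq0
      have hq0surj : Function.Surjective q0 := by
        apply (Submodule.mkQ_surjective _).comp
        rintro ⟨y, hy⟩
        obtain ⟨x, hx⟩ := hy
        exact ⟨x, Subtype.ext hx⟩
      let q : D.obj (Opposite.op I) ⟶ Vo := ObjectProperty.homMk (ModuleCat.ofHom q0)
      have hDq : Function.Injective
          (show (D.obj (Opposite.op Vo)).obj ⟶
            (D.obj (Opposite.op (D.obj (Opposite.op I)))).obj from (D.map q.op).hom) :=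
        hD_epi (D.obj (Opposite.op I)) Vo q hq0surj
      set f₂ : (D.obj (Opposite.op (D.obj (Opposite.op I)))).obj →ₗ[R] I.obj :=
        (show ((D.rightOp ⋙ D).obj I).obj ⟶ I.obj from (hDD.hom.app I).hom).hom with hf₂
      have hf₂bij : Function.Bijective f₂ := (SZisoEquiv (hDD.app I)).bijective
      set e' : (D.obj (Opposite.op Vo)).obj →ₗ[R] I.obj :=
        f₂.comp (show (D.obj (Opposite.op Vo)).obj ⟶
          (D.obj (Opposite.op (D.obj (Opposite.op I)))).obj from (D.map q.op).hom).hom with he'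
      have he'inj : Function.Injective e' := hf₂bij.injective.comp hDq
      set W : Submodule R I.obj := LinearMap.range e' with hW
      haveI : Nontrivial (D.obj (Opposite.op Vo)).obj := by
        apply Dnontriv
        exact hVqs.nontrivial
      have hWne : W ≠ ⊥ := by
        rw [hW]
        intro hbot
        obtain ⟨x, hx⟩ := exists_ne (0 : (D.obj (Opposite.op Vo)).obj)
        apply hx
        apply he'inj
        have hmem : e' x ∈ LinearMap.range e' := LinearMap.mem_range_self e' x
        rw [hbot, Submodule.mem_bot] at hmem
        rw [hmem, map_zero]
      have heW : (D.obj (Opposite.op Vo)).obj ≃ₗ[R] ↥W := LinearEquiv.ofInjective e' he'inj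
      have hdW : d ↥W = n := a3 W hWne
      have hdVq : d Vq = n := by
        have h1 := dcongr (D.obj (Opposite.op Vo)).obj ↥W (D.obj (Opposite.op Vo)).property heW
        have h2 : d (D.obj (Opposite.op Vo)).obj = d Vq := hdD Vo
        exact h2.symm.trans (h1.trans hdW)
      have hcfVq : IsCompFactor R I.obj Vq :=
        ⟨hVqs, K, J, hKJ.le, ⟨LinearEquiv.refl _ _⟩⟩
      obtain ⟨⟨isoDV⟩, hmult⟩ := a2 Vo hcfVq hdVq
      have eWV : ↥W ≃ₗ[R] Vq := heW.symm.trans (SZisoEquiv isoDV)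
      haveI hWsimple : IsSimpleModule R ↥W := IsSimpleModule.congr eWV
      by_cases hWJ : W ≤ J
      · have hWS : W ≤ S := le_sSup ⟨hWsimple, hWJ⟩
        have hbotW : (⊥ : Submodule R I.obj) ⋖ W := by
          rw [covBy_iff_quot_is_simple bot_le]
          exact IsSimpleModule.congr ((SZquotBot W).trans eWV)
        exact SZtwo_occ hIfl hbotW (hWS.trans hSK) hKJ
          ⟨(SZquotBot W).trans eWV⟩ ⟨LinearEquiv.refl _ _⟩ hmult
      · have hWJbot : W ⊓ J = ⊥ := by
          have hatom := isSimpleModule_iff_isAtom.mp hWsimple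
          rcases hatom.le_iff.mp inf_le_left with h | h
          · exact h
          · exact absurd (h ▸ inf_le_right) hWJ
        have hWJc : Submodule.comap W.subtype (W ⊓ J) =
            Submodule.comap W.subtype (⊥ : Submodule R I.obj) := by rw [hWJbot]
        have e2 : (↥(W ⊔ J) ⧸ Submodule.comap (W ⊔ J).subtype J) ≃ₗ[R] Vq :=
          (LinearMap.quotientInfEquivSupQuotient W J).symm.trans
            (((Submodule.quotEquivOfEq _ _ hWJc).trans (SZquotBot W)).trans eWV)
        have hJsup : J ⋖ W ⊔ J := by
          rw [covBy_iff_quot_is_simple le_sup_right]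
          exact IsSimpleModule.congr e2
        exact SZtwo_occ hIfl hKJ le_rfl hJsup ⟨LinearEquiv.refl _ _⟩ ⟨e2⟩ hmult
  have hrange : J = socle R I.obj := le_antisymm hJsoc hsocJ
  haveI hss : IsSemisimpleModule R ↥(socle R I.obj) :=
    SZsemisimple_sSup fun W hW => hW
  -- ## Part (4): every composition factor of maximal d embeds into the socle
  have hembed : ∀ V : FLMod R, IsCompFactor R I.obj V.obj → d V.obj = n →
      ∃ W : Submodule R I.obj, W ≤ socle R I.obj ∧ IsSimpleModule R ↥W ∧
        Nonempty (↥W ≃ₗ[R] V.obj) := by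
    intro V hcf hdV
    obtain ⟨hVs, A, B, hAB, ⟨eBA⟩⟩ := hcf
    haveI := hVs
    set Qm : Type u := (I.obj ⧸ A : Type u) with hQm
    set Qo : FLMod R := ⟨ModuleCat.of R Qm, SZfl_quot hIfl A⟩ with hQo
    let π : I ⟶ Qo := ObjectProperty.homMk (ModuleCat.ofHom A.mkQ)
    have hπsurj : Function.Surjective (show I.obj ⟶ Qo.obj from π.hom) :=
      Submodule.mkQ_surjective A
    set B' : Submodule R Qm := Submodule.map A.mkQ B with hB'
    have hres : ∀ x ∈ B, A.mkQ x ∈ B' := fun x hx => Submodule.mem_map_of_mem hx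
    set g : ↥B →ₗ[R] ↥B' := (A.mkQ).restrict hres with hg
    have hgsurj : Function.Surjective g := by
      rintro ⟨y, hy⟩
      obtain ⟨b, hbB, hb⟩ := hy
      exact ⟨⟨b, hbB⟩, Subtype.ext hb⟩
    have hgker : LinearMap.ker g = Submodule.comap B.subtype A := by
      ext x
      simp only [hg, LinearMap.mem_ker, Submodule.mem_comap, Submodule.coe_subtype]
      constructor
      · intro h
        have hval : A.mkQ (x : I.obj) = 0 := congrArg Subtype.val h
        rwa [Submodule.mkQ_apply, Submodule.Quotient.mk_eq_zero] at hval
      · intro h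
        apply Subtype.ext
        show A.mkQ (x : I.obj) = 0
        rwa [Submodule.mkQ_apply, Submodule.Quotient.mk_eq_zero]
    have eB' : ↥B' ≃ₗ[R] V.obj :=
      ((Submodule.quotEquivOfEq _ _ hgker.symm).trans
        (g.quotKerEquivOfSurjective hgsurj)).symm.trans eBA
    let j : V ⟶ Qo := ObjectProperty.homMk (ModuleCat.ofHom (B'.subtype.comp eB'.symm.toLinearMap))
    have hjinj : Function.Injective (show V.obj ⟶ Qo.obj from j.hom) :=
      B'.injective_subtype.comp eB'.symm.injective
    have hDj : Function.Surjective
        (show (D.obj (Opposite.op Qo)).obj ⟶ (D.obj (Opposite.op V)).obj from (D.map j.op).hom) :=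
      hD_mono V Qo j hjinj
    set Dπl : (D.obj (Opposite.op Qo)).obj →ₗ[R] (D.obj (Opposite.op I)).obj :=
      (show (D.obj (Opposite.op Qo)).obj ⟶ (D.obj (Opposite.op I)).obj from (D.map π.op).hom).hom
      with hDπl
    have hDπ : Function.Injective Dπl := hD_epi I Qo π hπsurj
    set U : Submodule R (D.obj (Opposite.op I)).obj := LinearMap.range Dπl with hU
    have eU : (D.obj (Opposite.op Qo)).obj ≃ₗ[R] ↥U := LinearEquiv.ofInjective Dπl hDπ
    obtain ⟨⟨isoDVV⟩, hmultV⟩ := a2 V ⟨hVs, A, B, hAB, ⟨eBA⟩⟩ hdV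
    set p : ↥U →ₗ[R] V.obj :=
      ((SZisoEquiv isoDVV).toLinearMap).comp
        ((show (D.obj (Opposite.op Qo)).obj ⟶ (D.obj (Opposite.op V)).obj from
          (D.map j.op).hom).hom.comp (eU.symm.toLinearMap)) with hpdef
    have hpsurj : Function.Surjective p :=
      (SZisoEquiv isoDVV).surjective.comp (hDj.comp eU.symm.surjective)
    have hcoatom : IsCoatom (LinearMap.ker p) :=
      isSimpleModule_iff_isCoatom.mp
        (IsSimpleModule.congr (p.quotKerEquivOfSurjective hpsurj))
    set Nk : Submodule R ↥U := Submodule.comap U.subtype (LinearMap.ker Ψl) with hNk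
    have hNker : Nk ≤ LinearMap.ker p := by
      by_contra hcon
      have hlt : LinearMap.ker p < LinearMap.ker p ⊔ Nk := left_lt_sup.mpr hcon
      have htop : LinearMap.ker p ⊔ Nk = ⊤ := hcoatom.2 _ hlt
      have h2 : Submodule.map p (LinearMap.ker p) = ⊥ :=
        le_bot_iff.mp (Submodule.map_le_iff_le_comap.mpr le_rfl)
      have hmap : Submodule.map p Nk = ⊤ := by
        have h1 : Submodule.map p (⊤ : Submodule R ↥U) = ⊤ := by
          rw [Submodule.map_top, LinearMap.range_eq_top.mpr hpsurj]
        rw [← htop, Submodule.map_sup, h2, bot_sup_eq] at h1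
        exact h1
      have hsurj' : Function.Surjective (p.comp Nk.subtype) := by
        rw [← LinearMap.range_eq_top, LinearMap.range_comp, Submodule.range_subtype, hmap]
      have hcfN : IsCompFactor R ↥Nk V.obj := SZcf_of_surj_map _ hsurj' hVs
      set ν : ↥Nk →ₗ[R] ↥(LinearMap.ker Ψl) :=
        LinearMap.codRestrict (LinearMap.ker Ψl) (U.subtype.comp Nk.subtype)
          (fun x => x.2) with hν
      have hcompinj : Function.Injective (U.subtype.comp Nk.subtype) :=
        U.injective_subtype.comp Nk.injective_subtype
      have hνinj : Function.Injective ν := by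
        intro x y hxy
        apply Nk.injective_subtype
        apply U.injective_subtype
        have hval : ((ν x : ↥(LinearMap.ker Ψl)) : (D.obj (Opposite.op I)).obj) =
            ((ν y : ↥(LinearMap.ker Ψl)) : (D.obj (Opposite.op I)).obj) :=
          congrArg Subtype.val hxy
        exact hval
      have hcfK : IsCompFactor R ↥(LinearMap.ker Ψl) V.obj :=
        SZcf_of_injective ν hνinj hcfN
      have hle := hd_le ↥(LinearMap.ker Ψl) V.obj (SZfl_sub hDfl _) hcfK
      omega
    set KU : Submodule R (D.obj (Opposite.op I)).obj :=
      Submodule.map U.subtype (LinearMap.ker p) with hKU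
    set A₀ : Submodule R I.obj := Submodule.map Ψl KU with hA₀
    set B₀ : Submodule R I.obj := Submodule.map Ψl U with hB₀
    have hA₀B₀ : A₀ ≤ B₀ := Submodule.map_mono (Submodule.map_subtype_le _ _)
    have hres2 : ∀ x ∈ U, Ψl x ∈ B₀ := fun x hx => Submodule.mem_map_of_mem hx
    set g2 : ↥U →ₗ[R] (↥B₀ ⧸ Submodule.comap B₀.subtype A₀) :=
      (Submodule.comap B₀.subtype A₀).mkQ.comp (Ψl.restrict hres2) with hg2
    have hg2surj : Function.Surjective g2 := by
      apply (Submodule.mkQ_surjective _).comp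
      rintro ⟨y, hy⟩
      obtain ⟨u, huU, hu⟩ := hy
      exact ⟨⟨u, huU⟩, Subtype.ext hu⟩
    have hg2ker : LinearMap.ker g2 = LinearMap.ker p := by
      ext x
      simp only [hg2, LinearMap.mem_ker, LinearMap.comp_apply, Submodule.mkQ_apply,
        Submodule.Quotient.mk_eq_zero, Submodule.mem_comap, LinearMap.restrict_apply,
        Submodule.coe_subtype]
      constructor
      · intro hmem
        rw [hA₀] at hmem
        obtain ⟨y, hyKU, hy⟩ := hmem
        rw [hKU] at hyKU
        obtain ⟨k, hk, rfl⟩ := hyKU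
        have hdiff : ((x : ↥U) - k : ↥U) ∈ Nk := by
          rw [hNk]
          show (Ψl) ((U.subtype) ((x : ↥U) - k)) = 0
          rw [map_sub, map_sub]
          rw [sub_eq_zero]
          exact hy.symm
        have hdiffker : ((x : ↥U) - k : ↥U) ∈ LinearMap.ker p := hNker hdiff
        have hxk : p x = p k + p ((x : ↥U) - k) := by rw [map_sub]; abel
        rw [hxk, hk, hdiffker]
        simp
      · intro hx
        exact ⟨(x : (D.obj (Opposite.op I)).obj), ⟨x, hx, rfl⟩, rfl⟩
    have eB₀ : (↥B₀ ⧸ Submodule.comap B₀.subtype A₀) ≃ₗ[R] V.obj :=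
      ((g2.quotKerEquivOfSurjective hg2surj).symm.trans
        (Submodule.quotEquivOfEq _ _ hg2ker)).trans (p.quotKerEquivOfSurjective hpsurj)
    have hB₀J : B₀ ≤ J := by
      rintro x ⟨u, huU, rfl⟩
      exact ⟨u, rfl⟩
    have hB₀soc : B₀ ≤ socle R I.obj := hB₀J.trans hJsoc
    haveI hssB₀ : IsSemisimpleModule R ↥B₀ :=
      IsSemisimpleModule.congr (Submodule.comapSubtypeEquivOfLe hB₀soc).symm
    obtain ⟨C, hC⟩ := exists_isCompl (Submodule.comap B₀.subtype A₀)
    have eC : ↥C ≃ₗ[R] V.obj :=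
      (Submodule.quotientEquivOfIsCompl _ C hC).symm.trans eB₀
    refine ⟨Submodule.map B₀.subtype C,
      le_trans (Submodule.map_subtype_le _ _) hB₀soc, ?_, ?_⟩
    · exact IsSimpleModule.congr
        ((Submodule.equivMapOfInjective B₀.subtype B₀.injective_subtype C).symm.trans eC)
    · exact ⟨(Submodule.equivMapOfInjective B₀.subtype B₀.injective_subtype C).symm.trans eC⟩
  -- ## Part (3)
  have hpart3 : d (I.obj ⧸ socle R I.obj) < n := by
    by_cases hQs : Subsingleton (I.obj ⧸ socle R I.obj)
    · rw [hd_zero _ hQs]; exact hn_pos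
    · haveI hQnt : Nontrivial (I.obj ⧸ socle R I.obj) :=
        not_subsingleton_iff_nontrivial.mp hQs
      obtain ⟨Aq, Bq, hABq, hsimpq, hdq⟩ := hd_max (I.obj ⧸ socle R I.obj)
        (SZfl_quot hIfl _) hQnt
      set F : Type u := (↥Bq ⧸ Submodule.comap Bq.subtype Aq) with hF
      have hcfF : IsCompFactor R I.obj F :=
        SZcf_of_surjective (socle R I.obj).mkQ (Submodule.mkQ_surjective _)
          ⟨hsimpq, Aq, Bq, hABq, ⟨LinearEquiv.refl _ _⟩⟩
      have hdFle : d F ≤ n := hd_le I.obj F hIfl hcfF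
      rcases lt_or_eq_of_le hdFle with h | h
      · rw [← hdq]; exact h
      · exfalso
        set Fo : FLMod R :=
          ⟨ModuleCat.of R F, SZfl_quot (SZfl_sub (SZfl_quot hIfl _) _) _⟩ with hFo
        obtain ⟨Wl, hWlsoc, hWlsimple, ⟨eWl⟩⟩ := hembed Fo hcfF h
        obtain ⟨-, hmultF⟩ := a2 Fo hcfF h
        set A' : Submodule R I.obj := Submodule.comap (socle R I.obj).mkQ Aq with hA'
        set B'' : Submodule R I.obj := Submodule.comap (socle R I.obj).mkQ Bq with hB''
        have hsocA' : socle R I.obj ≤ A' := by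
          intro x hx
          show (socle R I.obj).mkQ x ∈ Aq
          have hz : (socle R I.obj).mkQ x = 0 := by
            rw [Submodule.mkQ_apply, Submodule.Quotient.mk_eq_zero]; exact hx
          rw [hz]; exact Aq.zero_mem
        have eup : (↥B'' ⧸ Submodule.comap B''.subtype A') ≃ₗ[R] F :=
          SZfactorEquiv (socle R I.obj).mkQ (Submodule.mkQ_surjective _) hABq
        have hcov : A' ⋖ B'' := by
          rw [covBy_iff_quot_is_simple (Submodule.comap_mono hABq)]
          exact IsSimpleModule.congr eup
        have hbotW : (⊥ : Submodule R I.obj) ⋖ Wl := by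
          rw [covBy_iff_quot_is_simple bot_le]
          haveI := hsimpq
          exact IsSimpleModule.congr ((SZquotBot Wl).trans eWl)
        exact SZtwo_occ hIfl hbotW (hWlsoc.trans hsocA') hcov
          ⟨(SZquotBot Wl).trans eWl⟩ ⟨eup⟩ hmultF
  refine ⟨hrange, hpart3, ?_⟩
  intro V hcf hdV
  obtain ⟨W, -, -, ⟨e⟩⟩ := hembed V hcf hdV
  exact ⟨W, ⟨e⟩⟩
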